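/- arXiv:1604.03906 — 3 statements merged into one kernel-verified Lean document; each statement's English description precedes it below -/
import Mathlib

section
/- Let u⁻ : [0,T) × ℝᵈ → ℝ be lower semicontinuous and bounded below on compact sets, and let φ ∈ C²(ℝᵈ). Suppose x₀ ∈ ℝᵈ is a global minimizer of x ↦ u⁻(T−, x) − φ(x) with value 0, where u⁻(T−,x) := liminf_{(t,x')→(T,x), t<T} u⁻(t,x'). Let (sₙ, ξₙ) be a sequence in [0,T) × ℝᵈ with (sₙ, ξₙ) → (T, x₀) and u⁻(sₙ, ξₙ) → u⁻(T−, x₀). For n ∈ ℕ, k > 0, ι > 0 define φₙ^{k,ι}(t,x) = φ(x) − ι|x−x₀|⁴ + k(T−t)/(T−sₙ), and let (tₙ^{k,ι}, xₙ^{k,ι}) be a minimizer of u⁻ − φₙ^{k,ι} on [sₙ, T] × cl(B₁(x₀)). Then for each k, ι > 0 there exists N such that tₙ^{k,ι} < T for all n ≥ N. -/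
open Filter Topology

variable {d : ℕ}

/-- The relaxed lower limit of `u` at the terminal time `T` from the parabolic
interior. -/
noncomputable def uTminus (T : ℝ) (u : ℝ × EuclideanSpace ℝ (Fin d) → ℝ)
    (x : EuclideanSpace ℝ (Fin d)) : ℝ :=
  Filter.liminf u
    (𝓝[(Set.Iio T) ×ˢ (Set.univ : Set (EuclideanSpace ℝ (Fin d)))] (T, x))

/-- Extension of `u` (defined on `[0,T) × ℝᵈ`) to the terminal time by its relaxed
lower limit `u(T−,·)`. -/
noncomputable def uExt (T : ℝ) (u : ℝ × EuclideanSpace ℝ (Fin d) → ℝ)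
    (p : ℝ × EuclideanSpace ℝ (Fin d)) : ℝ :=
  if p.1 < T then u p else uTminus T u p.2

/-- The penalized test function `φₙ^{k,ι}(t,x) = φ(x) − ι|x−x₀|⁴ + k(T−t)/(T−sₙ)`. -/
noncomputable def phiPen (T : ℝ) (φ : EuclideanSpace ℝ (Fin d) → ℝ)
    (x₀ : EuclideanSpace ℝ (Fin d)) (s k ι : ℝ)
    (p : ℝ × EuclideanSpace ℝ (Fin d)) : ℝ :=
  φ p.2 - ι * ‖p.2 - x₀‖ ^ 4 + k * (T - p.1) / (T - s)

/-- Step 2.B of Theorem 4.1: the time-penalization `k(T−t)/(T−sₙ)` forces the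
minimizers of `u⁻ − φₙ^{k,ι}` over `[sₙ,T] × cl(B₁(x₀))` to satisfy `tₙ^{k,ι} < T`
for all large `n`. -/
theorem penalized_minimizer_interior_in_time
    (T : ℝ) (hT : 0 < T)
    (u : ℝ × EuclideanSpace ℝ (Fin d) → ℝ)
    (hlsc : LowerSemicontinuousOn u
      ((Set.Ico 0 T) ×ˢ (Set.univ : Set (EuclideanSpace ℝ (Fin d)))))
    (hbb : ∀ K : Set (ℝ × EuclideanSpace ℝ (Fin d)), IsCompact K →
      ∃ c : ℝ, ∀ p ∈ K ∩ (Set.Ico 0 T) ×ˢ (Set.univ : Set (EuclideanSpace ℝ (Fin d))),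
        c ≤ u p)
    (φ : EuclideanSpace ℝ (Fin d) → ℝ) (hφ : ContDiff ℝ 2 φ)
    (x₀ : EuclideanSpace ℝ (Fin d))
    (hglobalmin : ∀ x, 0 ≤ uTminus T u x - φ x)
    (hmin0 : uTminus T u x₀ = φ x₀)
    (s : ℕ → ℝ) (ξ : ℕ → EuclideanSpace ℝ (Fin d))
    (hs : ∀ n, 0 ≤ s n ∧ s n < T)
    (hsξ : Filter.Tendsto (fun n => (s n, ξ n)) Filter.atTop (𝓝 (T, x₀)))
    (huconv : Filter.Tendsto (fun n => u (s n, ξ n)) Filter.atTop (𝓝 (uTminus T u x₀)))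
    (tm : ℕ → ℝ → ℝ → ℝ) (xm : ℕ → ℝ → ℝ → EuclideanSpace ℝ (Fin d))
    (hmem : ∀ n : ℕ, ∀ k > (0 : ℝ), ∀ ι > (0 : ℝ),
      (tm n k ι, xm n k ι) ∈ Set.Icc (s n) T ×ˢ Metric.closedBall x₀ 1)
    (hminimizer : ∀ n : ℕ, ∀ k > (0 : ℝ), ∀ ι > (0 : ℝ),
      ∀ p ∈ Set.Icc (s n) T ×ˢ Metric.closedBall x₀ 1,
        uExt T u (tm n k ι, xm n k ι) - phiPen T φ x₀ (s n) k ι (tm n k ι, xm n k ι) ≤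
          uExt T u p - phiPen T φ x₀ (s n) k ι p) :
    ∀ k > (0 : ℝ), ∀ ι > (0 : ℝ), ∃ N : ℕ, ∀ n ≥ N, tm n k ι < T := by
  intro k hk ι hι
  have hξ : Tendsto ξ atTop (𝓝 x₀) := (continuous_snd.tendsto _).comp hsξ
  have hnorm : Tendsto (fun n => ι * ‖ξ n - x₀‖ ^ 4) atTop (𝓝 0) := by
    have : Tendsto (fun n => ξ n - x₀) atTop (𝓝 (x₀ - x₀)) :=
      hξ.sub tendsto_const_nhds
    rw [sub_self] at this
    have := (tendsto_const_nhds.mul ((this.norm).pow 4) :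
      Tendsto (fun n => ι * ‖ξ n - x₀‖ ^ 4) atTop (𝓝 (ι * ‖(0 : EuclideanSpace ℝ (Fin d))‖ ^ 4)))
    simpa using this
  have hval : Tendsto (fun n => u (s n, ξ n) - φ (ξ n) + ι * ‖ξ n - x₀‖ ^ 4 - k)
      atTop (𝓝 (-k)) := by
    have h1 : Tendsto (fun n => φ (ξ n)) atTop (𝓝 (φ x₀)) :=
      (hφ.continuous.tendsto x₀).comp hξ
    have := ((huconv.sub h1).add hnorm).sub_const k
    rw [hmin0] at this
    simpa using this
  have hev1 : ∀ᶠ n in atTop, u (s n, ξ n) - φ (ξ n) + ι * ‖ξ n - x₀‖ ^ 4 - k < 0 := by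
    have := hval.eventually (eventually_lt_nhds (by linarith : -k < 0))
    exact this
  have hev2 : ∀ᶠ n in atTop, ξ n ∈ Metric.closedBall x₀ 1 :=
    hξ (Metric.closedBall_mem_nhds x₀ one_pos)
  obtain ⟨N, hN⟩ := (hev1.and hev2).exists_forall_of_atTop
  refine ⟨N, fun n hn => ?_⟩
  obtain ⟨hneg, hball⟩ := hN n hn
  by_contra hc
  have hmemn := hmem n k hk ι hι
  have htmT : tm n k ι = T := le_antisymm hmemn.1.2 (not_lt.mp hc)
  have hsn := hs n
  have hsne : T - s n ≠ 0 := sub_ne_zero.mpr (ne_of_gt hsn.2)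
  have hle := hminimizer n k hk ι hι (s n, ξ n)
    ⟨⟨le_refl _, hsn.2.le⟩, hball⟩
  have hRHS : uExt T u (s n, ξ n) - phiPen T φ x₀ (s n) k ι (s n, ξ n) =
      u (s n, ξ n) - φ (ξ n) + ι * ‖ξ n - x₀‖ ^ 4 - k := by
    simp only [uExt, phiPen, if_pos hsn.2]
    rw [mul_div_assoc, div_self hsne]
    ring
  have hLHS : uExt T u (tm n k ι, xm n k ι) -
      phiPen T φ x₀ (s n) k ι (tm n k ι, xm n k ι) =
      (uTminus T u (xm n k ι) - φ (xm n k ι)) + ι * ‖xm n k ι - x₀‖ ^ 4 := by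
    simp only [uExt, phiPen, htmT, if_neg (lt_irrefl T), sub_self, mul_zero,
      zero_div]
    ring
  rw [hLHS, hRHS] at hle
  have h0 : (0 : ℝ) ≤ (uTminus T u (xm n k ι) - φ (xm n k ι)) + ι * ‖xm n k ι - x₀‖ ^ 4 := by
    have := hglobalmin (xm n k ι)
    positivity
  linarith
end

section
/- Under the same setting as the penalization claim: the minimizers satisfy xₙ^{k,ι} → x₀ as n → ∞ (for each fixed k, ι > 0), and moreover φₙ^{k,ι}(tₙ^{k,ι}, xₙ^{k,ι}) → u⁻(T−, x₀) = φ(x₀) when one lets n → ∞, then k → 0, then ι → 0. -/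
open Filter Topology

variable {d : ℕ}

/-- Auxiliary lemma: lower bound on `uExt` along a sequence converging to a terminal
point. -/
lemma auxB {d : ℕ} (T : ℝ) (hT : 0 < T)
    (u : ℝ × EuclideanSpace ℝ (Fin d) → ℝ)
    (hbb : ∀ K : Set (ℝ × EuclideanSpace ℝ (Fin d)), IsCompact K →
      ∃ c : ℝ, ∀ p ∈ K ∩ (Set.Ico 0 T) ×ˢ (Set.univ : Set (EuclideanSpace ℝ (Fin d))),
        c ≤ u p)
    (φ : EuclideanSpace ℝ (Fin d) → ℝ) (hφ : Continuous φ)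
    (hglobx : ∀ y, φ y ≤ uTminus T u y)
    (xbar : EuclideanSpace ℝ (Fin d))
    (t : ℕ → ℝ) (x : ℕ → EuclideanSpace ℝ (Fin d))
    (ht : ∀ j, t j ≤ T)
    (hconv : Tendsto (fun j => (t j, x j)) atTop (𝓝 (T, xbar)))
    {δ : ℝ} (hδ : 0 < δ) :
    ∀ᶠ j in atTop, φ xbar - δ < uExt T u (t j, x j) := by
  set l := 𝓝[(Set.Iio T) ×ˢ (Set.univ : Set (EuclideanSpace ℝ (Fin d)))]
    ((T, xbar) : ℝ × EuclideanSpace ℝ (Fin d)) with hl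
  obtain ⟨c, hc⟩ := hbb (Set.Icc 0 T ×ˢ Metric.closedBall xbar 1)
    (isCompact_Icc.prod (isCompact_closedBall _ _))
  have hbdd : l.IsBoundedUnder (· ≥ ·) u := by
    refine ⟨c, eventually_map.mpr ?_⟩
    have h1 : ∀ᶠ p : ℝ × EuclideanSpace ℝ (Fin d) in l,
        p ∈ (Set.Iio T) ×ˢ (Set.univ : Set (EuclideanSpace ℝ (Fin d))) :=
      eventually_mem_nhdsWithin
    have h2 : ∀ᶠ p : ℝ × EuclideanSpace ℝ (Fin d) in l,
        p ∈ Set.Ioi (0:ℝ) ×ˢ Metric.ball xbar 1 := by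
      apply eventually_nhdsWithin_of_eventually_nhds
      exact (isOpen_Ioi.prod Metric.isOpen_ball).eventually_mem
        ⟨hT, Metric.mem_ball_self one_pos⟩
    filter_upwards [h1, h2] with p hp1 hp2
    exact hc p ⟨⟨⟨le_of_lt hp2.1, le_of_lt hp1.1⟩, Metric.ball_subset_closedBall hp2.2⟩,
      ⟨le_of_lt hp2.1, hp1.1⟩, trivial⟩
  have hlim : φ xbar - δ < Filter.liminf u l :=
    lt_of_lt_of_le (by linarith) (hglobx xbar)
  have hev : ∀ᶠ p in l, φ xbar - δ < u p := eventually_lt_of_lt_liminf hlim hbdd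
  rw [hl, eventually_nhdsWithin_iff] at hev
  have hev2 : ∀ᶠ j in atTop,
      (t j, x j) ∈ (Set.Iio T) ×ˢ (Set.univ : Set (EuclideanSpace ℝ (Fin d))) →
        φ xbar - δ < u (t j, x j) := hconv.eventually hev
  have hxconv : Tendsto (fun j => x j) atTop (𝓝 xbar) :=
    (continuous_snd.tendsto _).comp hconv
  have hφev : ∀ᶠ j in atTop, φ xbar - δ < φ (x j) :=
    ((hφ.tendsto _).comp hxconv).eventually_const_lt (by linarith)
  filter_upwards [hev2, hφev] with j h1 h2
  by_cases hj : t j < T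
  · have : uExt T u (t j, x j) = u (t j, x j) := if_pos hj
    rw [this]
    exact h1 ⟨hj, trivial⟩
  · have : uExt T u (t j, x j) = uTminus T u (x j) := if_neg hj
    rw [this]
    exact lt_of_lt_of_le h2 (hglobx (x j))

/-- Step 2.B of Theorem 4.1 (convergence of the penalized minimizers): for fixed
`k, ι > 0` the space components `xₙ^{k,ι}` converge to `x₀`, and the values
`φₙ^{k,ι}(tₙ^{k,ι}, xₙ^{k,ι})` converge to `u⁻(T−,x₀) = φ(x₀)` in the iterated limit
`n → ∞`, then `k → 0`, then `ι → 0`. -/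
theorem penalized_minimizer_convergence
    (T : ℝ) (hT : 0 < T)
    (u : ℝ × EuclideanSpace ℝ (Fin d) → ℝ)
    (hlsc : LowerSemicontinuousOn u
      ((Set.Ico 0 T) ×ˢ (Set.univ : Set (EuclideanSpace ℝ (Fin d)))))
    (hbb : ∀ K : Set (ℝ × EuclideanSpace ℝ (Fin d)), IsCompact K →
      ∃ c : ℝ, ∀ p ∈ K ∩ (Set.Ico 0 T) ×ˢ (Set.univ : Set (EuclideanSpace ℝ (Fin d))),
        c ≤ u p)
    (φ : EuclideanSpace ℝ (Fin d) → ℝ) (hφ : ContDiff ℝ 2 φ)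
    (x₀ : EuclideanSpace ℝ (Fin d))
    (hglobalmin : ∀ x, 0 ≤ uTminus T u x - φ x)
    (hmin0 : uTminus T u x₀ = φ x₀)
    (s : ℕ → ℝ) (ξ : ℕ → EuclideanSpace ℝ (Fin d))
    (hs : ∀ n, 0 ≤ s n ∧ s n < T)
    (hsξ : Filter.Tendsto (fun n => (s n, ξ n)) Filter.atTop (𝓝 (T, x₀)))
    (huconv : Filter.Tendsto (fun n => u (s n, ξ n)) Filter.atTop (𝓝 (uTminus T u x₀)))
    (tm : ℕ → ℝ → ℝ → ℝ) (xm : ℕ → ℝ → ℝ → EuclideanSpace ℝ (Fin d))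
    (hmem : ∀ n : ℕ, ∀ k > (0 : ℝ), ∀ ι > (0 : ℝ),
      (tm n k ι, xm n k ι) ∈ Set.Icc (s n) T ×ˢ Metric.closedBall x₀ 1)
    (hminimizer : ∀ n : ℕ, ∀ k > (0 : ℝ), ∀ ι > (0 : ℝ),
      ∀ p ∈ Set.Icc (s n) T ×ˢ Metric.closedBall x₀ 1,
        uExt T u (tm n k ι, xm n k ι) - phiPen T φ x₀ (s n) k ι (tm n k ι, xm n k ι) ≤
          uExt T u p - phiPen T φ x₀ (s n) k ι p) :
    (∀ k > (0 : ℝ), ∀ ι > (0 : ℝ),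
      Filter.Tendsto (fun n => xm n k ι) Filter.atTop (𝓝 x₀)) ∧
      (∀ ε > (0 : ℝ), ∃ ι₀ > (0 : ℝ), ∀ ι, 0 < ι → ι < ι₀ →
        ∃ k₀ > (0 : ℝ), ∀ k, 0 < k → k < k₀ → ∃ N : ℕ, ∀ n ≥ N,
          |phiPen T φ x₀ (s n) k ι (tm n k ι, xm n k ι) - φ x₀| < ε) := by
  have hφc : Continuous φ := hφ.continuous
  have hsT : Tendsto s atTop (𝓝 T) := (continuous_fst.tendsto _).comp hsξ
  have hξT : Tendsto ξ atTop (𝓝 x₀) := (continuous_snd.tendsto _).comp hsξ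
  have hglobx : ∀ y, φ y ≤ uTminus T u y := fun y => by
    have := hglobalmin y; linarith
  have key : ∀ k > (0:ℝ), ∀ ι > (0:ℝ),
      Tendsto (fun n => xm n k ι) atTop (𝓝 x₀) := by
    intro k hk ι hι
    have hmem' := fun n => hmem n k hk ι hι
    have hxball : ∀ n, xm n k ι ∈ Metric.closedBall x₀ 1 := fun n => (hmem' n).2
    have htI : ∀ n, tm n k ι ∈ Set.Icc (s n) T := fun n => (hmem' n).1
    -- the right-hand side sequence and its limit
    obtain ⟨R, hRdef⟩ : ∃ R : ℕ → ℝ,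
        R = fun n => u (s n, ξ n) - φ (ξ n) + ι * ‖ξ n - x₀‖^4 := ⟨_, rfl⟩
    have hR : Tendsto R atTop (𝓝 0) := by
      rw [hRdef]
      have h1 : Tendsto (fun n => φ (ξ n)) atTop (𝓝 (φ x₀)) :=
        (hφc.tendsto _).comp hξT
      have h2 : Tendsto (fun n => ι * ‖ξ n - x₀‖^4) atTop (𝓝 (ι * ‖x₀ - x₀‖^4)) :=
        (((hξT.sub tendsto_const_nhds).norm.pow 4).const_mul ι)
      have := (huconv.sub h1).add h2
      simp only [sub_self, norm_zero] at this
      rw [hmin0] at this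
      simpa using this
    -- the central inequality
    have hineq : ∀ᶠ n in atTop,
        uExt T u (tm n k ι, xm n k ι) - φ (xm n k ι) + ι * ‖xm n k ι - x₀‖^4 ≤ R n := by
      have hball : ∀ᶠ n in atTop, ξ n ∈ Metric.closedBall x₀ 1 :=
        hξT.eventually_mem (Metric.closedBall_mem_nhds _ one_pos)
      filter_upwards [hball] with n hb
      have hsn : s n < T := (hs n).2
      have hTs : (0:ℝ) < T - s n := by linarith
      have hp : ((s n, ξ n) : ℝ × EuclideanSpace ℝ (Fin d)) ∈
          Set.Icc (s n) T ×ˢ Metric.closedBall x₀ 1 := ⟨⟨le_refl _, hsn.le⟩, hb⟩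
      have h := hminimizer n k hk ι hι _ hp
      have e2 : uExt T u (s n, ξ n) = u (s n, ξ n) := if_pos hsn
      have e1 : phiPen T φ x₀ (s n) k ι (s n, ξ n) = φ (ξ n) - ι * ‖ξ n - x₀‖^4 + k := by
        unfold phiPen
        simp only
        rw [mul_div_assoc, div_self hTs.ne', mul_one]
      have e3 : phiPen T φ x₀ (s n) k ι (tm n k ι, xm n k ι) =
          φ (xm n k ι) - ι * ‖xm n k ι - x₀‖^4 + k * (T - tm n k ι) / (T - s n) := rfl
      rw [e2, e1, e3] at h
      have hθ : k * (T - tm n k ι) / (T - s n) ≤ k := by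
        rw [div_le_iff₀ hTs]
        nlinarith [(htI n).1, (htI n).2]
      simp only [hRdef]
      linarith
    -- subsequence argument
    apply Filter.tendsto_of_subseq_tendsto
    intro ns hns
    obtain ⟨xbar, hxbarmem, ms, hms, hconv⟩ :=
      (isCompact_closedBall x₀ 1).tendsto_subseq (fun j => hxball (ns j))
    refine ⟨ms, ?_⟩
    have hm : Tendsto (fun j => ns (ms j)) atTop atTop := hns.comp hms.tendsto_atTop
    have hxconv : Tendsto (fun j => xm (ns (ms j)) k ι) atTop (𝓝 xbar) := hconv
    have htT : Tendsto (fun j => tm (ns (ms j)) k ι) atTop (𝓝 T) := by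
      apply tendsto_of_tendsto_of_tendsto_of_le_of_le (hsT.comp hm) tendsto_const_nhds
      · exact fun j => (htI (ns (ms j))).1
      · exact fun j => (htI (ns (ms j))).2
    have hpair : Tendsto (fun j => (tm (ns (ms j)) k ι, xm (ns (ms j)) k ι)) atTop
        (𝓝 (T, xbar)) := htT.prodMk_nhds hxconv
    have hnorm : Tendsto (fun j => ι * ‖xm (ns (ms j)) k ι - x₀‖^4) atTop
        (𝓝 (ι * ‖xbar - x₀‖^4)) :=
      ((hxconv.sub tendsto_const_nhds).norm.pow 4).const_mul ι
    have hle0 : ι * ‖xbar - x₀‖^4 ≤ 0 := by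
      by_contra hpos
      push_neg at hpos
      set a := ι * ‖xbar - x₀‖^4 with ha
      clear_value a
      have E1 : ∀ᶠ j in atTop, φ xbar - a/4 <
          uExt T u (tm (ns (ms j)) k ι, xm (ns (ms j)) k ι) :=
        auxB T hT u hbb φ hφc hglobx xbar _ _ (fun j => (htI (ns (ms j))).2) hpair
          (by linarith)
      have E2 : ∀ᶠ j in atTop,
          uExt T u (tm (ns (ms j)) k ι, xm (ns (ms j)) k ι) - φ (xm (ns (ms j)) k ι)
            + ι * ‖xm (ns (ms j)) k ι - x₀‖^4 ≤ R (ns (ms j)) := hm.eventually hineq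
      have E3 : ∀ᶠ j in atTop, R (ns (ms j)) < a/4 := by
        have := (hR.comp hm).eventually_lt_const (show (0:ℝ) < a/4 by linarith)
        simpa [Function.comp] using this
      have E4 : ∀ᶠ j in atTop, φ (xm (ns (ms j)) k ι) < φ xbar + a/4 := by
        have := ((hφc.tendsto _).comp hxconv).eventually_lt_const
          (show φ xbar < φ xbar + a/4 by linarith)
        simpa [Function.comp] using this
      have E5 : ∀ᶠ j in atTop, a - a/4 < ι * ‖xm (ns (ms j)) k ι - x₀‖^4 :=
        hnorm.eventually_const_lt (by linarith)
      obtain ⟨j, h1, h2, h3, h4, h5⟩ := (E1.and (E2.and (E3.and (E4.and E5)))).exists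
      linarith
    have h4 : ‖xbar - x₀‖^4 = 0 := by
      nlinarith [pow_nonneg (norm_nonneg (xbar - x₀)) 4]
    have hxbar : xbar = x₀ := by
      have h5 : ‖xbar - x₀‖ = 0 := by
        by_contra hne
        have hpos' : 0 < ‖xbar - x₀‖ := lt_of_le_of_ne (norm_nonneg _) (Ne.symm hne)
        have := pow_pos hpos' 4
        linarith
      rw [norm_eq_zero, sub_eq_zero] at h5
      exact h5
    rw [hxbar] at hxconv
    exact hxconv
  refine ⟨key, ?_⟩
  intro ε hε
  refine ⟨ε/3, by positivity, fun ι hι hιε => ⟨ε/3, by positivity, fun k hk hkε => ?_⟩⟩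
  have hx := key k hk ι hι
  have hφx : Tendsto (fun n => φ (xm n k ι)) atTop (𝓝 (φ x₀)) := (hφc.tendsto _).comp hx
  have hev : ∀ᶠ n in atTop, |φ (xm n k ι) - φ x₀| < ε/3 := by
    have : Tendsto (fun n => φ (xm n k ι) - φ x₀) atTop (𝓝 0) := by
      simpa using hφx.sub (tendsto_const_nhds (x := φ x₀))
    have h2 : Tendsto (fun n => |φ (xm n k ι) - φ x₀|) atTop (𝓝 0) := by
      simpa [Real.norm_eq_abs] using this.norm
    exact h2.eventually_lt_const (by positivity)
  obtain ⟨N, hN⟩ := eventually_atTop.mp hev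
  refine ⟨N, fun n hn => ?_⟩
  have hA := hN n hn
  have hmem' := hmem n k hk ι hι
  have hsn : s n < T := (hs n).2
  have hTs : (0:ℝ) < T - s n := by linarith
  have htI := hmem'.1
  have hxb : ‖xm n k ι - x₀‖ ≤ 1 := by
    have := hmem'.2
    rwa [Metric.mem_closedBall, dist_eq_norm] at this
  have hB1 : (0:ℝ) ≤ ι * ‖xm n k ι - x₀‖^4 :=
    mul_nonneg hι.le (pow_nonneg (norm_nonneg _) 4)
  have hp4 : ‖xm n k ι - x₀‖^4 ≤ 1 := pow_le_one₀ (norm_nonneg _) hxb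
  have hB2 : ι * ‖xm n k ι - x₀‖^4 ≤ ι := by nlinarith
  have hθ1 : (0:ℝ) ≤ k * (T - tm n k ι) / (T - s n) := by
    apply div_nonneg _ hTs.le
    have := htI.2
    nlinarith
  have hθ2 : k * (T - tm n k ι) / (T - s n) ≤ k := by
    rw [div_le_iff₀ hTs]
    nlinarith [htI.1, htI.2]
  have e3 : phiPen T φ x₀ (s n) k ι (tm n k ι, xm n k ι) =
      φ (xm n k ι) - ι * ‖xm n k ι - x₀‖^4 + k * (T - tm n k ι) / (T - s n) := rfl
  rw [e3]
  rw [abs_lt] at hA ⊢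
  constructor <;> [skip; skip] <;> linarith [hA.1, hA.2]
end

section
/- Let Γ be a real-valued adapted càdlàg process on [τ, T] and L a nonnegative càdlàg supermartingale with L(τ) > 0 a.s. on an event B ∈ ℱ_τ with ℙ(B) > 0. Suppose ΓL is a supermartingale on [τ, T] and Γ(τ) < 0 on B. Then for every stopping time ρ ∈ [τ, T], ℙ({Γ(ρ)L(ρ) < 0} ∩ B) > 0, and hence ℙ({Γ(ρ) < 0} ∩ B) > 0. -/
open MeasureTheory Filter Topology

/-- Supermartingale argument of Step 2 of Theorem 3.1: if `L` is a nonnegative càdlàg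
supermartingale, `Γ·L` is a supermartingale, `Γ(τ) < 0` and `L(τ) > 0` on a
positive-probability event `B ∈ ℱ_τ`, then for any stopping time `ρ` with
`τ ≤ ρ ≤ T`, `ℙ({Γ(ρ)L(ρ) < 0} ∩ B) > 0`, and hence `ℙ({Γ(ρ) < 0} ∩ B) > 0`. -/
theorem supermartingale_stays_negative
    {Ω : Type*} {m0 : MeasurableSpace Ω} {μ : Measure Ω} [IsProbabilityMeasure μ]
    (ℱ : Filtration ℝ m0) (Γ L : ℝ → Ω → ℝ)
    (τ T : ℝ) (hτT : τ ≤ T)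
    (hΓcadlag : ∀ ω, ∀ t : ℝ, Filter.Tendsto (fun s => Γ s ω) (𝓝[>] t) (𝓝 (Γ t ω)))
    (hLcadlag : ∀ ω, ∀ t : ℝ, Filter.Tendsto (fun s => L s ω) (𝓝[>] t) (𝓝 (L t ω)))
    (hΓadapted : Adapted ℱ Γ)
    (hLnonneg : ∀ t ω, 0 ≤ L t ω)
    (hLsuper : Supermartingale L ℱ μ)
    (hΓLsuper : Supermartingale (fun t ω => Γ t ω * L t ω) ℱ μ)
    (B : Set Ω) (hB : MeasurableSet[ℱ τ] B) (hBpos : 0 < μ B)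
    (hLτ : ∀ ω ∈ B, 0 < L τ ω)
    (hΓτ : ∀ ω ∈ B, Γ τ ω < 0)
    (ρ : Ω → ℝ) (hρ : IsStoppingTime ℱ (fun ω => (ρ ω : WithTop ℝ)))
    (hρmem : ∀ ω, τ ≤ ρ ω ∧ ρ ω ≤ T) :
    0 < μ ({ω | Γ (ρ ω) ω * L (ρ ω) ω < 0} ∩ B) ∧
      0 < μ ({ω | Γ (ρ ω) ω < 0} ∩ B) := by
  classical
  set X : ℝ → Ω → ℝ := fun t ω => Γ t ω * L t ω with hXdef
  have hBm0 : MeasurableSet B := ℱ.le τ _ hB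
  have hXint : ∀ t, Integrable (X t) μ := fun t => hΓLsuper.integrable t
  -- horizon
  obtain ⟨m, hm⟩ : ∃ m : ℕ, T ≤ τ + m :=
    ⟨⌈T - τ⌉₊, by have := Nat.le_ceil (T - τ); linarith⟩
  set S : ℝ := τ + m with hSdef
  have hρS : ∀ ω, ρ ω ≤ S := fun ω => (hρmem ω).2.trans hm
  have hpow : ∀ n : ℕ, (0:ℝ) < 2 ^ n := fun n => by positivity
  -- dyadic grids
  set t : ℕ → ℕ → ℝ := fun n k => τ + (k : ℝ) / 2 ^ n with htdef
  have htτ : ∀ n k, τ ≤ t n k := fun n k =>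
    le_add_of_nonneg_right (by positivity)
  have htmono : ∀ n, ∀ {k l : ℕ}, k ≤ l → t n k ≤ t n l := by
    intro n k l hkl
    dsimp only [t]
    gcongr
  set G : ℕ → Filtration ℕ m0 := fun n =>
    { seq := fun k => ℱ (t n k)
      mono' := fun k l hkl => ℱ.mono (htmono n hkl)
      le' := fun k => ℱ.le _ } with hGdef
  -- discrete supermartingale
  have hFsuper : ∀ n, Supermartingale (fun k => X (t n k)) (G n) μ :=
    fun n => ⟨fun k => hΓLsuper.stronglyAdapted (t n k),
      fun i j hij => hΓLsuper.2.1 _ _ (htmono n hij), fun k => hXint _⟩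
  -- discrete stopping times
  set σ : ℕ → Ω → ℕ := fun n ω => ⌈(ρ ω - τ) * 2 ^ n⌉₊ with hσdef
  have hσle : ∀ n k (ω : Ω), σ n ω ≤ k ↔ ρ ω ≤ t n k := by
    intro n k ω
    dsimp only [σ, t]
    rw [Nat.ceil_le, ← sub_le_iff_le_add', le_div_iff₀ (hpow n)]
  have hσst : ∀ n, IsStoppingTime (G n) (fun ω => WithTop.some (σ n ω)) := by
    intro n k
    have h1 : {ω | WithTop.some (σ n ω) ≤ WithTop.some k}
        = {ω | (ρ ω : WithTop ℝ) ≤ (t n k : WithTop ℝ)} :=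
      Set.ext fun ω => by simp only [Set.mem_setOf_eq, WithTop.coe_le_coe]; exact hσle n k ω
    show MeasurableSet[G n k] {ω | WithTop.some (σ n ω) ≤ WithTop.some k}
    rw [h1]
    exact hρ (t n k)
  have hσbdd : ∀ n ω, σ n ω ≤ m * 2 ^ n := by
    intro n ω
    dsimp only [σ]
    refine Nat.ceil_le.2 ?_
    push_cast
    have h1 : ρ ω - τ ≤ m := by have := hρS ω; rw [hSdef] at this; linarith
    exact mul_le_mul_of_nonneg_right h1 (hpow n).le
  set ρn : ℕ → Ω → ℝ := fun n ω => t n (σ n ω) with hρndef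
  have hρ_le_ρn : ∀ n ω, ρ ω ≤ ρn n ω := fun n ω => (hσle n (σ n ω) ω).1 le_rfl
  have hρn_le : ∀ n ω, ρn n ω ≤ ρ ω + 1 / 2 ^ n := by
    intro n ω
    have h0 : 0 ≤ (ρ ω - τ) * 2 ^ n :=
      mul_nonneg (by linarith [(hρmem ω).1]) (hpow n).le
    have h2 : ((⌈(ρ ω - τ) * 2 ^ n⌉₊ : ℝ)) < (ρ ω - τ) * 2 ^ n + 1 :=
      Nat.ceil_lt_add_one h0
    have e : ((ρ ω - τ) + 1 / 2 ^ n) * 2 ^ n = (ρ ω - τ) * 2 ^ n + 1 := by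
      field_simp
    have h3 : ((⌈(ρ ω - τ) * 2 ^ n⌉₊ : ℝ)) / 2 ^ n ≤ (ρ ω - τ) + 1 / 2 ^ n := by
      rw [div_le_iff₀ (hpow n), e]
      linarith
    dsimp only [ρn, t, σ]
    linarith
  -- right-continuity of X within Ici
  have hXrc : ∀ ω s, Tendsto (fun u => X u ω) (𝓝[≥] s) (𝓝 (X s ω)) := by
    intro ω s
    have h1 : Tendsto (fun u => X u ω) (𝓝[>] s) (𝓝 (X s ω)) :=
      (hΓcadlag ω s).mul (hLcadlag ω s)
    have h2 : (Set.Ici s) = insert s (Set.Ioi s) := by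
      ext x; simp [le_iff_lt_or_eq, or_comm, eq_comm]
    rw [h2, nhdsWithin_insert, tendsto_sup]
    exact ⟨tendsto_pure_nhds _ _, h1⟩
  have h2n : Tendsto (fun n : ℕ => (1:ℝ) / 2 ^ n) atTop (𝓝 0) := by
    simpa [div_pow] using
      tendsto_pow_atTop_nhds_zero_of_lt_one (by norm_num : (0:ℝ) ≤ 1/2) (by norm_num)
  have hρnconv : ∀ ω, Tendsto (fun n => ρn n ω) atTop (𝓝[≥] (ρ ω)) := by
    intro ω
    have hupper : Tendsto (fun n : ℕ => ρ ω + 1 / 2 ^ n) atTop (𝓝 (ρ ω)) := by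
      simpa using tendsto_const_nhds.add h2n
    refine tendsto_nhdsWithin_of_tendsto_nhds_of_eventually_within _
      (tendsto_of_tendsto_of_tendsto_of_le_of_le tendsto_const_nhds hupper
        (fun n => hρ_le_ρn n ω) (fun n => hρn_le n ω))
      (Eventually.of_forall fun n => hρ_le_ρn n ω)
  have hXconv : ∀ ω, Tendsto (fun n => X (ρn n ω) ω) atTop (𝓝 (X (ρ ω) ω)) :=
    fun ω => (hXrc ω (ρ ω)).comp (hρnconv ω)
  -- strict negativity at τ on B
  have hXτB : ∀ ω ∈ B, X τ ω < 0 := fun ω hω =>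
    mul_neg_of_neg_of_pos (hΓτ ω hω) (hLτ ω hω)
  set c : ℝ := ∫ ω in B, X τ ω ∂μ with hcdef
  have hcneg : c < 0 := by
    have hint : IntegrableOn (X τ) B μ := (hXint τ).integrableOn
    have h1 : 0 < ∫ ω in B, (-X τ ω) ∂μ := by
      rw [setIntegral_pos_iff_support_of_nonneg_ae
        ((ae_restrict_iff' hBm0).2 (Eventually.of_forall fun ω hω =>
          (neg_nonneg.2 (hXτB ω hω).le))) hint.neg]
      refine hBpos.trans_le (measure_mono fun ω hω => ⟨?_, hω⟩)
      exact ne_of_gt (neg_pos.2 (hXτB ω hω))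
    rw [integral_neg] at h1
    linarith
  have hBk : ∀ n k, MeasurableSet[G n k] B := fun n k => ℱ.mono (htτ n k) _ hB
  -- Step A : optional stopping inequality on B
  have hstepA : ∀ n, ∫ ω in B, stoppedValue (fun k => X (t n k)) (fun ω => WithTop.some (σ n ω)) ω ∂μ ≤ c := by
    intro n
    set F : ℕ → Ω → ℝ := fun k => X (t n k) with hFdef
    set π : Ω → ℕ := fun ω => if ω ∈ B then σ n ω else 0 with hπdef
    have hπst : IsStoppingTime (G n) (fun ω => WithTop.some (π ω)) := by
      intro k
      have h1 : {ω | WithTop.some (π ω) ≤ WithTop.some k}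
          = (B ∩ {ω | WithTop.some (σ n ω) ≤ WithTop.some k}) ∪ Bᶜ := by
        ext ω; by_cases hω : ω ∈ B <;> simp [π, hω]
      show MeasurableSet[G n k] {ω | WithTop.some (π ω) ≤ WithTop.some k}
      rw [h1]
      exact ((hBk n k).inter (hσst n k)).union (hBk n k).compl
    have hπbdd : ∀ ω, π ω ≤ m * 2 ^ n := by
      intro ω; dsimp only [π]
      split
      · exact hσbdd n ω
      · exact Nat.zero_le _
    have h0st : IsStoppingTime (G n) (fun _ => WithTop.some 0) := isStoppingTime_const _ 0
    have hmono := (hFsuper n).neg.expected_stoppedValue_mono h0st hπst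
      (fun ω => WithTop.coe_le_coe.2 (Nat.zero_le _)) (fun ω => WithTop.coe_le_coe.2 (hπbdd ω))
    have hneg1 : stoppedValue (-F) (fun _ => WithTop.some (0:ℕ)) = fun ω => -(F 0 ω) := rfl
    have hneg2 : stoppedValue (-F) (fun ω => WithTop.some (π ω))
        = fun ω => -(stoppedValue F (fun ω => WithTop.some (π ω)) ω) := rfl
    rw [hneg1, hneg2, integral_neg, integral_neg, neg_le_neg_iff] at hmono
    -- hmono : μ[stoppedValue F π] ≤ μ[F 0]
    have hπint : Integrable (stoppedValue F (fun ω => WithTop.some (π ω))) μ :=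
      integrable_stoppedValue ℕ hπst (fun k => hXint _) (fun ω => WithTop.coe_le_coe.2 (hπbdd ω))
    have split1 : ∫ ω, stoppedValue F (fun ω => WithTop.some (π ω)) ω ∂μ
        = ∫ ω in B, stoppedValue F (fun ω => WithTop.some (σ n ω)) ω ∂μ + ∫ ω in Bᶜ, F 0 ω ∂μ := by
      rw [← integral_add_compl hBm0 hπint]
      congr 1
      · exact setIntegral_congr_fun hBm0 (fun ω hω => by
          simp [stoppedValue, π, hω])
      · exact setIntegral_congr_fun hBm0.compl (fun ω hω => by
          simp only [Set.mem_compl_iff] at hω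
          simp [stoppedValue, π, hω])
    have split2 : ∫ ω, F 0 ω ∂μ
        = ∫ ω in B, F 0 ω ∂μ + ∫ ω in Bᶜ, F 0 ω ∂μ :=
      (integral_add_compl hBm0 (hXint _)).symm
    have ht0 : t n 0 = τ := by simp [t]
    have hF0 : ∫ ω in B, F 0 ω ∂μ = c := by
      rw [hcdef]; dsimp only [F]; rw [ht0]
    rw [split1, split2, hF0] at hmono
    linarith
  -- the nonnegative discrete submartingale of negative parts
  set NP : ℕ → ℕ → Ω → ℝ := fun n k ω => max (-X (t n k) ω) 0 with hNPdef
  have hNPsub : ∀ n, Submartingale (NP n) (G n) μ := by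
    intro n
    have h1 : Submartingale (-(fun k => X (t n k))) (G n) μ := (hFsuper n).neg
    have h2 := h1.sup ((martingale_zero ℝ (G n) μ).submartingale)
    have h3 : ((-(fun k => X (t n k))) ⊔ (0 : ℕ → Ω → ℝ)) = NP n := by
      funext k ω
      simp [NP, Pi.sup_apply]
    rwa [h3] at h2
  have hNPnn : ∀ n k ω, 0 ≤ NP n k ω := fun n k ω => le_max_right _ _
  set g : Ω → ℝ := fun ω => max (-X S ω) 0 with hgdef
  have hgnn : ∀ ω, 0 ≤ g ω := fun ω => le_max_right _ _
  have hgint : Integrable g μ := (hXint S).neg.pos_part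
  have htN : ∀ n, t n (m * 2 ^ n) = S := by
    intro n
    dsimp only [t]
    rw [hSdef]
    congr 1
    push_cast
    rw [mul_div_assoc, div_self (hpow n).ne', mul_one]
  have hNPN : ∀ n, NP n (m * 2 ^ n) = g := by
    intro n; funext ω; dsimp only [NP, g]; rw [htN n]
  have hNPint : ∀ n k, Integrable (NP n k) μ := fun n k => (hNPsub n).integrable k
  have hsvNPint : ∀ n, Integrable (stoppedValue (NP n) (fun ω => WithTop.some (σ n ω))) μ :=
    fun n => integrable_stoppedValue ℕ (hσst n) (hNPint n) (fun ω => WithTop.coe_le_coe.2 (hσbdd n ω))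
  have hsvNPnn : ∀ n ω, 0 ≤ stoppedValue (NP n) (fun ω => WithTop.some (σ n ω)) ω := fun n ω => hNPnn n _ ω
  -- submartingale optional stopping bound on stopping-time measurable sets
  have hsubopt : ∀ n (A : Set Ω), MeasurableSet[(hσst n).measurableSpace] A →
      ∫ ω in A, stoppedValue (NP n) (fun ω => WithTop.some (σ n ω)) ω ∂μ ≤ ∫ ω in A, g ω ∂μ := by
    intro n A hA
    set N := m * 2 ^ n with hNdef
    have hAk : ∀ k, MeasurableSet[G n k] (A ∩ {ω | WithTop.some (σ n ω) ≤ WithTop.some k}) :=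
      fun k => hA.2 k
    have hAN : MeasurableSet[G n N] A :=
      ((hσst n).measurableSpace_le_of_le_const
        (fun ω => WithTop.coe_le_coe.2 (hσbdd n ω))) A hA
    have hAm0 : MeasurableSet A := (G n).le N A hAN
    set π : Ω → ℕ := fun ω => if ω ∈ A then σ n ω else N with hπdef
    have hπst : IsStoppingTime (G n) (fun ω => WithTop.some (π ω)) := by
      intro k
      show MeasurableSet[G n k] {ω | WithTop.some (π ω) ≤ WithTop.some k}
      by_cases hk : N ≤ k
      · have h1 : {ω | WithTop.some (π ω) ≤ WithTop.some k}
            = (A ∩ {ω | WithTop.some (σ n ω) ≤ WithTop.some k}) ∪ Aᶜ := by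
          ext ω; by_cases hω : ω ∈ A <;> simp [π, hω, hk]
        rw [h1]
        exact (hAk k).union ((G n).mono hk _ hAN).compl
      · have h1 : {ω | WithTop.some (π ω) ≤ WithTop.some k}
            = A ∩ {ω | WithTop.some (σ n ω) ≤ WithTop.some k} := by
          ext ω; by_cases hω : ω ∈ A <;> simp [π, hω, hk]
        rw [h1]
        exact hAk k
    have hπbdd : ∀ ω, π ω ≤ N := by
      intro ω; dsimp only [π]; split
      · exact hσbdd n ω
      · exact le_rfl
    have hmono := (hNPsub n).expected_stoppedValue_mono hπst
      (isStoppingTime_const (G n) N) (fun ω => WithTop.coe_le_coe.2 (hπbdd ω)) (fun ω => le_rfl)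
    have hcN : stoppedValue (NP n) (fun _ => WithTop.some N) = NP n N := rfl
    rw [hcN] at hmono
    have hπint : Integrable (stoppedValue (NP n) (fun ω => WithTop.some (π ω))) μ :=
      integrable_stoppedValue ℕ hπst (hNPint n) (fun ω => WithTop.coe_le_coe.2 (hπbdd ω))
    have split1 : ∫ ω, stoppedValue (NP n) (fun ω => WithTop.some (π ω)) ω ∂μ
        = ∫ ω in A, stoppedValue (NP n) (fun ω => WithTop.some (σ n ω)) ω ∂μ + ∫ ω in Aᶜ, NP n N ω ∂μ := by
      rw [← integral_add_compl hAm0 hπint]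
      congr 1
      · exact setIntegral_congr_fun hAm0 (fun ω hω => by
          simp [stoppedValue, π, hω])
      · exact setIntegral_congr_fun hAm0.compl (fun ω hω => by
          simp only [Set.mem_compl_iff] at hω
          simp [stoppedValue, π, hω]; rfl)
    have split2 : ∫ ω, NP n N ω ∂μ
        = ∫ ω in A, NP n N ω ∂μ + ∫ ω in Aᶜ, NP n N ω ∂μ :=
      (integral_add_compl hAm0 (hNPint n N)).symm
    rw [split1, split2] at hmono
    rw [show (∫ ω in A, g ω ∂μ) = ∫ ω in A, NP n N ω ∂μ by rw [hNPN n]]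
    linarith
  -- measurability of the stopped values
  have hsvmeas : ∀ n, Measurable (stoppedValue (NP n) (fun ω => WithTop.some (σ n ω))) := by
    intro n
    have h1 : Measurable[(hσst n).measurableSpace] (stoppedValue (NP n) (fun ω => WithTop.some (σ n ω))) :=
      measurable_stoppedValue (hNPsub n).stronglyAdapted.progMeasurable_of_discrete (hσst n)
    exact h1.mono (hσst n).measurableSpace_le le_rfl
  have hBmeas_st : ∀ n, MeasurableSet[(hσst n).measurableSpace] B := by
    intro n
    refine ⟨le_iSup (fun k => G n k) 0 _ (hBk n 0), fun k => ?_⟩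
    exact (hBk n k).inter (hσst n k)
  have hsvFint : ∀ n, Integrable (stoppedValue (fun k => X (t n k)) (fun ω => WithTop.some (σ n ω))) μ :=
    fun n => integrable_stoppedValue ℕ (hσst n) (fun k => hXint _) (fun ω => WithTop.coe_le_coe.2 (hσbdd n ω))
  set C : ℝ := ∫ ω, g ω ∂μ with hCdef
  have hC0 : 0 ≤ C := integral_nonneg hgnn
  set ε : ℝ := -c with hεdef
  have hε : 0 < ε := neg_pos.2 hcneg
  -- truncation of g
  have hminint : ∀ K : ℝ, 0 ≤ K → Integrable (fun ω => min (g ω) K) μ := by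
    intro K hK
    refine Integrable.mono' hgint
      ((hgint.aestronglyMeasurable.inf aestronglyMeasurable_const)) ?_
    refine Eventually.of_forall fun ω => ?_
    rw [Real.norm_eq_abs, abs_of_nonneg (le_min (hgnn ω) hK)]
    exact min_le_left _ _
  have htrunc : Tendsto (fun K : ℕ => ∫ ω, min (g ω) (K : ℝ) ∂μ) atTop (𝓝 C) := by
    rw [hCdef]
    refine tendsto_integral_of_dominated_convergence g
      (fun K => (hminint K (Nat.cast_nonneg K)).aestronglyMeasurable) hgint
      (fun K => Eventually.of_forall fun ω => ?_)
      (Eventually.of_forall fun ω => ?_)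
    · rw [Real.norm_eq_abs, abs_of_nonneg (le_min (hgnn ω) (Nat.cast_nonneg K))]
      exact min_le_left _ _
    · have : ∀ᶠ K : ℕ in atTop, min (g ω) (K : ℝ) = g ω := by
        filter_upwards [eventually_ge_atTop ⌈g ω⌉₊] with K hK
        exact min_eq_left ((Nat.le_ceil (g ω)).trans (by exact_mod_cast hK))
      exact tendsto_const_nhds.congr' (this.mono fun K hK => hK.symm)
  obtain ⟨K1, hK1⟩ : ∃ K1 : ℕ, C - ε/4 < ∫ ω, min (g ω) (K1 : ℝ) ∂μ :=
    (htrunc.eventually (eventually_gt_nhds (by linarith : C - ε/4 < C))).exists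
  set K1r : ℝ := (K1 : ℝ) with hK1rdef
  have hK1r0 : 0 ≤ K1r := Nat.cast_nonneg _
  -- tail bound for g
  have htail : ∀ A : Set Ω, MeasurableSet A →
      ∫ ω in A, g ω ∂μ ≤ K1r * (μ A).toReal + ε/4 := by
    intro A hA
    have hmin : Integrable (fun ω => min (g ω) K1r) μ := hminint _ hK1r0
    have hg2int : Integrable (fun ω => g ω - min (g ω) K1r) μ := by
      have := hgint.sub hmin; exact this
    have e1 : ∫ ω in A, g ω ∂μ
        = ∫ ω in A, min (g ω) K1r ∂μ + ∫ ω in A, (g ω - min (g ω) K1r) ∂μ := by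
      rw [← integral_add hmin.integrableOn hg2int.integrableOn]
      refine setIntegral_congr_fun hA (fun ω _ => ?_)
      show g ω = min (g ω) K1r + (g ω - min (g ω) K1r)
      ring
    have e2 : ∫ ω in A, min (g ω) K1r ∂μ ≤ K1r * (μ A).toReal := by
      calc ∫ ω in A, min (g ω) K1r ∂μ ≤ ∫ _ω in A, K1r ∂μ :=
            setIntegral_mono_on hmin.integrableOn (integrableOn_const) hA (fun ω _ => min_le_right _ _)
        _ = (μ A).toReal • K1r := setIntegral_const _
        _ = K1r * (μ A).toReal := by rw [smul_eq_mul]; ring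
    have e3 : ∫ ω in A, (g ω - min (g ω) K1r) ∂μ ≤ ε/4 := by
      calc ∫ ω in A, (g ω - min (g ω) K1r) ∂μ
          ≤ ∫ ω, (g ω - min (g ω) K1r) ∂μ :=
            setIntegral_le_integral hg2int
              (Eventually.of_forall fun ω => sub_nonneg.2 (min_le_left _ _))
        _ = C - ∫ ω, min (g ω) K1r ∂μ := by rw [integral_sub hgint hmin, hCdef]
        _ ≤ ε/4 := by linarith
    linarith
  set K : ℝ := max 1 (4*(K1r+1)*(C+1)/ε) with hKdef
  have hKpos : (0:ℝ) < K := lt_of_lt_of_le one_pos (le_max_left _ _)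
  have hKge : 4*(K1r+1)*(C+1)/ε ≤ K := le_max_right _ _
  -- the main positivity claim
  have main : 0 < μ ({ω | X (ρ ω) ω < 0} ∩ B) := by
    by_contra hcon
    have hzero : μ ({ω | X (ρ ω) ω < 0} ∩ B) = 0 := le_zero_iff.mp (not_lt.mp hcon)
    have hae : ∀ᵐ ω ∂μ.restrict B, 0 ≤ X (ρ ω) ω := by
      rw [ae_iff]
      have hset : {ω | ¬ 0 ≤ X (ρ ω) ω} = {ω | X (ρ ω) ω < 0} := by
        ext ω; simp [not_le]
      rw [Measure.restrict_apply' hBm0, hset, hzero]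
    -- the exceptional sets
    set A : ℕ → Set Ω := fun n => B ∩ {ω | K < stoppedValue (NP n) (fun ω => WithTop.some (σ n ω)) ω} with hAdef
    have hAst : ∀ n, MeasurableSet[(hσst n).measurableSpace] (A n) := by
      intro n
      refine (hBmeas_st n).inter ?_
      exact (measurable_stoppedValue (hNPsub n).stronglyAdapted.progMeasurable_of_discrete
        (hσst n)) measurableSet_Ioi
    have hAm0 : ∀ n, MeasurableSet (A n) :=
      fun n => (hσst n).measurableSpace_le _ (hAst n)
    -- Markov bound
    have hmarkov : ∀ n, K * (μ (A n)).toReal ≤ C := by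
      intro n
      calc K * (μ (A n)).toReal
          ≤ ∫ ω in A n, stoppedValue (NP n) (fun ω => WithTop.some (σ n ω)) ω ∂μ :=
            by have h := setIntegral_ge_of_const_le (hAm0 n) (measure_ne_top _ _)
                 (fun ω hω => hω.2.le) (hsvNPint n).integrableOn
               rw [smul_eq_mul, measureReal_def, mul_comm] at h; exact h
        _ ≤ ∫ ω in A n, g ω ∂μ := hsubopt n (A n) (hAst n)
        _ ≤ C := setIntegral_le_integral hgint (Eventually.of_forall hgnn)
    have hμA : ∀ n, K1r * (μ (A n)).toReal ≤ ε/4 := by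
      intro n
      have ha : (0:ℝ) ≤ (μ (A n)).toReal := ENNReal.toReal_nonneg
      have h1 : (μ (A n)).toReal ≤ ε / (4*(K1r+1)) := by
        by_contra hcon2
        push_neg at hcon2
        have h2 : 4*(K1r+1)*(C+1)/ε * (ε / (4*(K1r+1))) = C + 1 := by
          field_simp
        have h3 : 4*(K1r+1)*(C+1)/ε * (ε / (4*(K1r+1))) < K * (μ (A n)).toReal := by
          have hpos : (0:ℝ) < 4*(K1r+1)*(C+1)/ε := by positivity
          calc 4*(K1r+1)*(C+1)/ε * (ε / (4*(K1r+1)))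
              < 4*(K1r+1)*(C+1)/ε * (μ (A n)).toReal := by
                exact mul_lt_mul_of_pos_left hcon2 hpos
            _ ≤ K * (μ (A n)).toReal :=
                mul_le_mul_of_nonneg_right hKge ha
        rw [h2] at h3
        linarith [hmarkov n]
      calc K1r * (μ (A n)).toReal ≤ K1r * (ε / (4*(K1r+1))) :=
            mul_le_mul_of_nonneg_left h1 hK1r0
        _ ≤ ε/4 := by
            have h5 : (0:ℝ) < 4*(K1r+1) := by positivity
            rw [mul_div_assoc', div_le_div_iff₀ h5 (by norm_num : (0:ℝ) < 4)]
            nlinarith [mul_nonneg hK1r0 hε.le]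
    -- integrability of truncated stopped values
    have hminsv : ∀ n, Integrable (fun ω => min (stoppedValue (NP n) (fun ω => WithTop.some (σ n ω)) ω) K) μ := by
      intro n
      refine Integrable.mono' (hsvNPint n)
        ((hsvmeas n).min measurable_const).aestronglyMeasurable ?_
      refine Eventually.of_forall fun ω => ?_
      rw [Real.norm_eq_abs, abs_of_nonneg (le_min (hsvNPnn n ω) hKpos.le)]
      exact min_le_left _ _
    -- lower bound : ε ≤ ∫_B sv NP
    have hlower : ∀ n, ε ≤ ∫ ω in B, stoppedValue (NP n) (fun ω => WithTop.some (σ n ω)) ω ∂μ := by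
      intro n
      have h1 : ∫ ω in B, (-(stoppedValue (fun k => X (t n k)) (fun ω => WithTop.some (σ n ω)) ω)) ∂μ
          ≤ ∫ ω in B, stoppedValue (NP n) (fun ω => WithTop.some (σ n ω)) ω ∂μ := by
        refine setIntegral_mono_on (hsvFint n).neg.integrableOn
          (hsvNPint n).integrableOn hBm0 (fun ω _ => ?_)
        exact le_max_left _ _
      rw [integral_neg] at h1
      have h2 := hstepA n
      rw [hεdef]
      linarith
    -- upper bound : ∫_B sv NP ≤ ∫_B min(sv, K) + ∫_{A n} g
    have hupper : ∀ n, ∫ ω in B, stoppedValue (NP n) (fun ω => WithTop.some (σ n ω)) ω ∂μ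
        ≤ ∫ ω in B, min (stoppedValue (NP n) (fun ω => WithTop.some (σ n ω)) ω) K ∂μ + ∫ ω in A n, g ω ∂μ := by
      intro n
      set s : Set Ω := {ω | K < stoppedValue (NP n) (fun ω => WithTop.some (σ n ω)) ω} with hsdef
      have hsm : MeasurableSet s := (hsvmeas n) measurableSet_Ioi
      have e1 : ∫ ω in B, stoppedValue (NP n) (fun ω => WithTop.some (σ n ω)) ω ∂μ
          = ∫ ω in B ∩ s, stoppedValue (NP n) (fun ω => WithTop.some (σ n ω)) ω ∂μ
            + ∫ ω in B \ s, stoppedValue (NP n) (fun ω => WithTop.some (σ n ω)) ω ∂μ :=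
        (integral_inter_add_diff hsm (hsvNPint n).integrableOn).symm
      have e2 : ∫ ω in B \ s, stoppedValue (NP n) (fun ω => WithTop.some (σ n ω)) ω ∂μ
          = ∫ ω in B \ s, min (stoppedValue (NP n) (fun ω => WithTop.some (σ n ω)) ω) K ∂μ :=
        setIntegral_congr_fun (hBm0.diff hsm) (fun ω hω =>
          (min_eq_left (not_lt.1 hω.2)).symm)
      have e3 : ∫ ω in B \ s, min (stoppedValue (NP n) (fun ω => WithTop.some (σ n ω)) ω) K ∂μ
          ≤ ∫ ω in B, min (stoppedValue (NP n) (fun ω => WithTop.some (σ n ω)) ω) K ∂μ := by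
        have := integral_inter_add_diff hsm (hminsv n).integrableOn (μ := μ) (s := B)
        have h4 : 0 ≤ ∫ ω in B ∩ s, min (stoppedValue (NP n) (fun ω => WithTop.some (σ n ω)) ω) K ∂μ :=
          setIntegral_nonneg (hBm0.inter hsm) (fun ω _ => le_min (hsvNPnn n ω) hKpos.le)
        linarith
      have e4 : ∫ ω in B ∩ s, stoppedValue (NP n) (fun ω => WithTop.some (σ n ω)) ω ∂μ ≤ ∫ ω in A n, g ω ∂μ :=
        hsubopt n (A n) (hAst n)
      rw [e1, e2]
      linarith
    -- dominated convergence
    have hlim0 : ∫ ω in B, min (max (-X (ρ ω) ω) 0) K ∂μ = 0 := by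
      refine integral_eq_zero_of_ae ?_
      filter_upwards [hae] with ω hω
      show min (max (-X (ρ ω) ω) 0) K = 0
      rw [max_eq_right (neg_nonpos.2 hω), min_eq_left hKpos.le]
    have hDCT : Tendsto (fun n => ∫ ω in B, min (stoppedValue (NP n) (fun ω => WithTop.some (σ n ω)) ω) K ∂μ)
        atTop (𝓝 0) := by
      rw [← hlim0]
      refine tendsto_integral_of_dominated_convergence (fun _ => K)
        (fun n => ((hsvmeas n).min measurable_const).aestronglyMeasurable.restrict)
        (integrable_const K)
        (fun n => Eventually.of_forall fun ω => ?_)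
        (Eventually.of_forall fun ω => ?_)
      · rw [Real.norm_eq_abs, abs_of_nonneg (le_min (hsvNPnn n ω) hKpos.le)]
        exact min_le_right _ _
      · exact (((hXconv ω).neg.max tendsto_const_nhds).min tendsto_const_nhds)
    obtain ⟨n, hn⟩ : ∃ n, ∫ ω in B, min (stoppedValue (NP n) (fun ω => WithTop.some (σ n ω)) ω) K ∂μ < ε/4 :=
      (hDCT.eventually (eventually_lt_nhds (by linarith : (0:ℝ) < ε/4))).exists
    have hg_An : ∫ ω in A n, g ω ∂μ ≤ K1r * (μ (A n)).toReal + ε/4 :=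
      htail (A n) (hAm0 n)
    have := hlower n
    have := hupper n
    have := hμA n
    linarith
  refine ⟨main, lt_of_lt_of_le main (measure_mono ?_)⟩
  rintro ω ⟨hω1, hω2⟩
  refine ⟨?_, hω2⟩
  by_contra hΓ
  have hΓ' : 0 ≤ Γ (ρ ω) ω := not_lt.1 (fun h => hΓ h)
  exact absurd (mul_nonneg hΓ' (hLnonneg (ρ ω) ω)) (not_le.2 hω1)
end
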